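/- arXiv:1902.02696 — 2 statements merged into one kernel-verified Lean document; each statement's English description precedes it below -/
import Mathlib

section
/- For the partial order on boolean valuations defined by β₁ ⪯ β₂ iff ∀s, β₁(s) → β₂(s): a valuation β is a minimal satisfying valuation of μ₀ ∧ trap-constraint(N) (where μ₀ = ⋁_{m₀(s)=1} s) if and only if W_β is a minimal (with respect to set inclusion among nonempty sets) initially marked trap of (N, m₀). -/
/-!
A valuation `β` is the same thing as the set `W_β = {s | β s = true}`, and `β ↦ W_β` is an order
isomorphism from `(S → Bool, ⪯)` onto `(Set S, ⊆)` whose inverse is `Set.boolIndicator`. Under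
it, satisfying `μ₀ ∧ trap-constraint(N)` means being an initially marked trap, so minimal
satisfying valuations correspond to minimal initially marked traps; these are automatically
nonempty since they contain a marked place.
-/

/-- `β` satisfies the trap constraint of the Petri net with edges `Esp`, `Eps`. -/
def SatTrapConstraint {S T : Type*} (Esp : S → T → Bool) (Eps : T → S → Bool)
    (β : S → Bool) : Prop :=
  ∀ t : T, (∃ s : S, Esp s t = true ∧ β s = true) → ∃ s : S, Eps t s = true ∧ β s = true

/-- `β` satisfies `μ₀ ∧ trap-constraint(N)`, where `μ₀ = ⋁_{m₀ s = 1} s`. -/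
def SatMuTrap {S T : Type*} (Esp : S → T → Bool) (Eps : T → S → Bool)
    (m₀ : S → ℕ) (β : S → Bool) : Prop :=
  (∃ s : S, m₀ s = 1 ∧ β s = true) ∧ SatTrapConstraint Esp Eps β

/-- Minimal satisfying valuation w.r.t. `β₁ ⪯ β₂ iff ∀ s, β₁ s → β₂ s`. -/
def MinSat {S T : Type*} (Esp : S → T → Bool) (Eps : T → S → Bool)
    (m₀ : S → ℕ) (β : S → Bool) : Prop :=
  SatMuTrap Esp Eps m₀ β ∧
    ∀ β' : S → Bool, (∀ s, β' s = true → β s = true) → β' ≠ β →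
      ¬ SatMuTrap Esp Eps m₀ β'

def IsTrap {S T : Type*} (Esp : S → T → Bool) (Eps : T → S → Bool) (W : Set S) : Prop :=
  ∀ t : T, (∃ s ∈ W, Esp s t = true) → ∃ s ∈ W, Eps t s = true

/-- An initially marked trap of `(N, m₀)`. -/
def IMT {S T : Type*} (Esp : S → T → Bool) (Eps : T → S → Bool)
    (m₀ : S → ℕ) (W : Set S) : Prop :=
  IsTrap Esp Eps W ∧ ∃ s ∈ W, m₀ s = 1

/-- A minimal IMT: no nonempty strict subset is an IMT. -/
def MinIMT {S T : Type*} (Esp : S → T → Bool) (Eps : T → S → Bool)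
    (m₀ : S → ℕ) (W : Set S) : Prop :=
  IMT Esp Eps m₀ W ∧
    ∀ W' : Set S, W' ⊆ W → W'.Nonempty → W' ≠ W → ¬ IMT Esp Eps m₀ W'

section PetriNet

variable {S T : Type*} (Esp : S → T → Bool) (Eps : T → S → Bool) (m₀ : S → ℕ)

theorem satTrapConstraint_iff_isTrap (β : S → Bool) :
    SatTrapConstraint Esp Eps β ↔ IsTrap Esp Eps {s | β s = true} := by
  simp only [SatTrapConstraint, IsTrap, Set.mem_ofPred_eq, and_comm]

theorem satMuTrap_iff_IMT (β : S → Bool) :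
    SatMuTrap Esp Eps m₀ β ↔ IMT Esp Eps m₀ {s | β s = true} := by
  rw [SatMuTrap, IMT, satTrapConstraint_iff_isTrap, and_comm]
  simp only [Set.mem_ofPred_eq, and_comm]

end PetriNet

theorem IMT.nonempty {S T : Type*} {Esp : S → T → Bool} {Eps : T → S → Bool} {m₀ : S → ℕ}
    {W : Set S} (hW : IMT Esp Eps m₀ W) : W.Nonempty :=
  let ⟨s, hs, _⟩ := hW.2
  ⟨s, hs⟩

theorem setOf_eq_true_injective {S : Type*} :
    Function.Injective fun β : S → Bool => {s | β s = true} := fun _ _ h =>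
  funext fun s => Bool.eq_iff_iff.2 (Set.ext_iff.1 h s)

theorem setOf_boolIndicator_eq_true {S : Type*} (W : Set S) :
    {s | W.boolIndicator s = true} = W :=
  Set.preimage_boolIndicator_true W

/-- `β` is a minimal satisfying valuation of `μ₀ ∧ trap-constraint(N)` iff
`W_β = {s | β s = true}` is a minimal initially marked trap of `(N, m₀)`. -/
theorem stmt6 {S T : Type*} (Esp : S → T → Bool) (Eps : T → S → Bool)
    (m₀ : S → ℕ) (β : S → Bool) :
    MinSat Esp Eps m₀ β ↔ MinIMT Esp Eps m₀ {s : S | β s = true} := by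
  constructor
  · rintro ⟨hsat, hmin⟩
    refine ⟨(satMuTrap_iff_IMT Esp Eps m₀ β).1 hsat, fun W hW _ hne hIMT => ?_⟩
    rw [← setOf_boolIndicator_eq_true W] at hW hne hIMT
    exact hmin W.boolIndicator (fun s hs => hW hs) (fun h => hne (by rw [h]))
      ((satMuTrap_iff_IMT Esp Eps m₀ _).2 hIMT)
  · rintro ⟨hIMT, hmin⟩
    refine ⟨(satMuTrap_iff_IMT Esp Eps m₀ β).2 hIMT, fun β' hle hne hsat' => ?_⟩
    have hIMT' := (satMuTrap_iff_IMT Esp Eps m₀ β').1 hsat'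
    exact hmin _ (fun s hs => hle s hs) hIMT'.nonempty
      (fun h => hne (setOf_eq_true_injective h)) hIMT'
end

section
/- Positivation commutes with booleanization up to equivalence: for a WS1S sentence φ over predicate symbols and n > 0, the propositional formulas pos(B_n(φ)) and B_n(Pos(φ)) are logically equivalent, given that (i) pos is the propositional positivation satisfying f ≡min pos(f) with pos(f) positive, (ii) Pos is any WS1S positivation satisfying φ ≡min Pos(φ) with Pos(φ) positive (all predicate symbols under an even number of negations), (iii) booleanization preserves and reflects models via β_S, and (iv) two positive propositional formulas are equivalent iff they are minimally equivalent. -/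
/-- WS1S terms: `0̄`, first-order variables, successor. -/
inductive WTerm
  | zero
  | fvar (x : ℕ)
  | succ (t : WTerm)

/-- Term evaluation over the universe `[n]`, with the bounded successor
`s(x) = x+1` for `x < n−1` and `s(n−1) = n−1`. -/
def WTerm.eval (n : ℕ) (ν : ℕ → ℕ) : WTerm → ℕ
  | .zero => 0
  | .fvar x => ν x
  | .succ t => min (t.eval n ν + 1) (n - 1)

/-- The ground index of a term, under an environment `e` assigning to each
first-order variable `x` the ground index `i` of the term `s^i(0̄)` it stands for. -/
def WTerm.gidx (e : ℕ → ℕ) : WTerm → ℕ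
  | .zero => 0
  | .fvar x => e x
  | .succ t => t.gidx e + 1

def WTerm.vars : WTerm → Set ℕ
  | .zero => ∅
  | .fvar x => {x}
  | .succ t => t.vars

/-- WS1S formulas: equalities, monadic predicate atoms, set-variable atoms,
conjunction, negation, first- and second-order existential quantifiers. -/
inductive WForm
  | eq (t₁ t₂ : WTerm)
  | pr (p : ℕ) (t : WTerm)
  | sv (X : ℕ) (t : WTerm)
  | and (a b : WForm)
  | not (a : WForm)
  | exF (x : ℕ) (a : WForm)
  | exS (X : ℕ) (a : WForm)

/-- Satisfaction over the structure `([n], ν, ι, μ)`. -/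
def WForm.Sat (n : ℕ) (ν : ℕ → ℕ) (ι μ : ℕ → Set ℕ) : WForm → Prop
  | .eq t₁ t₂ => t₁.eval n ν = t₂.eval n ν
  | .pr p t => t.eval n ν ∈ ι p
  | .sv X t => t.eval n ν ∈ μ X
  | .and a b => a.Sat n ν ι μ ∧ b.Sat n ν ι μ
  | .not a => ¬ a.Sat n ν ι μ
  | .exF x a => ∃ i < n, a.Sat n (Function.update ν x i) ι μ
  | .exS X a => ∃ S : Set ℕ, S ⊆ {i | i < n} ∧ a.Sat n ν ι (Function.update μ X S)

/-- Free first-order variables. -/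
def WForm.freeF : WForm → Set ℕ
  | .eq t₁ t₂ => t₁.vars ∪ t₂.vars
  | .pr _ t => t.vars
  | .sv _ t => t.vars
  | .and a b => a.freeF ∪ b.freeF
  | .not a => a.freeF
  | .exF x a => a.freeF \ {x}
  | .exS _ a => a.freeF

/-- Free second-order (set) variables. -/
def WForm.freeS : WForm → Set ℕ
  | .eq _ _ => ∅
  | .pr _ _ => ∅
  | .sv X _ => {X}
  | .and a b => a.freeS ∪ b.freeS
  | .not a => a.freeS
  | .exF _ a => a.freeS
  | .exS X a => a.freeS \ {X}

/-- Propositional formulas over the variables `pr_j`, coded as pairs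
`(predicate symbol, position)`. -/
inductive PF
  | const (b : Bool)
  | pvar (v : ℕ × ℕ)
  | and (f g : PF)
  | or (f g : PF)
  | not (f : PF)

def PF.Sat (β : ℕ × ℕ → Prop) : PF → Prop
  | .const b => b = true
  | .pvar v => β v
  | .and f g => f.Sat β ∧ g.Sat β
  | .or f g => f.Sat β ∨ g.Sat β
  | .not f => ¬ f.Sat β

def bigOr (l : List PF) : PF := l.foldr PF.or (PF.const false)

/-- The specified interpretation of the ground equality `s^i(0̄) = s^j(0̄)`:
`i = j ∨ (i ≥ n−1 ∧ j ≥ n−1)`. -/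
def eqB (n i j : ℕ) : Bool := decide (i = j ∨ (n - 1 ≤ i ∧ n - 1 ≤ j))

/-- Booleanization `B_n`.  The environments `e` (resp. `E`) record, for each free
first-order (resp. second-order) variable, the ground index (resp. set of ground
indices) substituted for it; quantifiers are unfolded to finite disjunctions
over `[n]` (resp. over subsets of `[n]`). -/
def boolize (n : ℕ) : WForm → (ℕ → ℕ) → (ℕ → List ℕ) → PF
  | .eq t₁ t₂, e, _ => .const (eqB n (t₁.gidx e) (t₂.gidx e))
  | .pr p t, e, _ => .pvar (p, min (t.gidx e) (n - 1))
  | .sv X t, e, E => .const ((E X).any (fun i => eqB n (t.gidx e) i))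
  | .and a b, e, E => .and (boolize n a e E) (boolize n b e E)
  | .not a, e, E => .not (boolize n a e E)
  | .exF x a, e, E =>
      bigOr (((List.range n).map (fun i => boolize n a (Function.update e x i) E)))
  | .exS X a, e, E =>
      bigOr (((List.range n).sublists.map (fun S => boolize n a e (Function.update E X S))))

/-- The boolean valuation `β_S` of a structure: `β_S (pr, j)` holds iff the
`j`-fold bounded successor of `0`, namely `min j (n−1)`, lies in `ι pr`. -/
def betaS (n : ℕ) (ι : ℕ → Set ℕ) : ℕ × ℕ → Prop :=
  fun v => min v.2 (n - 1) ∈ ι v.1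

/-- `PosIn b f`: under current parity `b` (true = even number of enclosing
negations), every propositional variable of `f` occurs positively. -/
def PF.PosIn : Bool → PF → Prop
  | _, .const _ => True
  | b, .pvar _ => b = true
  | b, .and f g => f.PosIn b ∧ g.PosIn b
  | b, .or f g => f.PosIn b ∧ g.PosIn b
  | b, .not f => f.PosIn (!b)

/-- A positive propositional formula: every variable under an even number of
negations. -/
def PF.Positive (f : PF) : Prop := f.PosIn true

/-- Positivity for WS1S formulas: every predicate symbol occurs under an even
number of negations. -/
def WForm.PosIn : Bool → WForm → Prop
  | _, .eq _ _ => True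
  | b, .pr _ _ => b = true
  | _, .sv _ _ => True
  | b, .and f g => f.PosIn b ∧ g.PosIn b
  | b, .not f => f.PosIn (!b)
  | b, .exF _ f => f.PosIn b
  | b, .exS _ f => f.PosIn b

def WForm.Positive (φ : WForm) : Prop := φ.PosIn true

/-- Minimal model of a propositional formula, w.r.t.
`β₁ ⪯ β₂ iff ∀ v, β₁ v → β₂ v`. -/
def PF.MinModel (f : PF) (β : ℕ × ℕ → Prop) : Prop :=
  f.Sat β ∧ ∀ β' : ℕ × ℕ → Prop, (∀ v, β' v → β v) → β' ≠ β → ¬ f.Sat β'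

/-- Minimal equivalence of propositional formulas. -/
def PF.EquivMin (f g : PF) : Prop := ∀ β, f.MinModel β ↔ g.MinModel β

/-- Minimal model of a WS1S formula w.r.t. `⊑`, i.e. pointwise inclusion of the
predicate interpretations (over the same universe `[n]`, with `ν`, `μ` fixed). -/
def WForm.MinModel (n : ℕ) (ν : ℕ → ℕ) (μ : ℕ → Set ℕ) (φ : WForm)
    (ι : ℕ → Set ℕ) : Prop :=
  φ.Sat n ν ι μ ∧ (∀ p, ι p ⊆ {i | i < n}) ∧
    ∀ ι' : ℕ → Set ℕ, (∀ p, ι' p ⊆ ι p) → ι' ≠ ι → ¬ φ.Sat n ν ι' μ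

/-- Minimal equivalence of WS1S formulas. -/
def WForm.EquivMin (n : ℕ) (ν : ℕ → ℕ) (μ : ℕ → Set ℕ) (φ ψ : WForm) : Prop :=
  ∀ ι, φ.MinModel n ν μ ι ↔ ψ.MinModel n ν μ ι

/-!
Valuations `β` of the variables `(p, j)` and interpretations `ι` of the predicate symbols are
order-isomorphic via `ι p = {j | β (p, j)}`. Since every variable of `B_n ψ` has position `j < n`,
`β` satisfies `B_n ψ` iff the corresponding `ι` satisfies `ψ`, and a minimal model of `B_n ψ`
vanishes at positions `≥ n`; so minimal models of `B_n ψ` correspond exactly to minimal WS1S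
models of `ψ` over `[n]`. Hence `Pos φ ≡min φ` gives `B_n (Pos φ) ≡min B_n φ ≡min pos (B_n φ)`,
and the outer two formulas are positive, so they are equivalent.
-/

def PF.vars : PF → Set (ℕ × ℕ)
  | .const _ => ∅
  | .pvar v => {v}
  | .and f g => f.vars ∪ g.vars
  | .or f g => f.vars ∪ g.vars
  | .not f => f.vars

lemma PF.sat_congr {f : PF} {β β' : ℕ × ℕ → Prop}
    (h : ∀ v ∈ f.vars, (β v ↔ β' v)) : f.Sat β ↔ f.Sat β' := by
  induction f with
  | const b => exact Iff.rfl
  | pvar v => exact h v rfl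
  | and f g ihf ihg =>
      exact and_congr (ihf fun v hv => h v (Or.inl hv)) (ihg fun v hv => h v (Or.inr hv))
  | or f g ihf ihg =>
      exact or_congr (ihf fun v hv => h v (Or.inl hv)) (ihg fun v hv => h v (Or.inr hv))
  | not f ihf => exact not_congr (ihf h)

lemma PF.minModel_iff_minimal {f : PF} {β : ℕ × ℕ → Prop} :
    f.MinModel β ↔ Minimal f.Sat β := by
  rw [minimal_iff_forall_lt]
  refine and_congr_right fun _ => forall_congr' fun β' => ?_
  rw [lt_iff_le_and_ne]
  exact ⟨fun h hlt => h hlt.1 hlt.2, fun h hle hne => h ⟨hle, hne⟩⟩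

lemma WForm.minModel_iff_minimal {n : ℕ} {ν : ℕ → ℕ} {μ : ℕ → Set ℕ} {φ : WForm}
    {ι : ℕ → Set ℕ} :
    φ.MinModel n ν μ ι ↔ Minimal (fun ι => φ.Sat n ν ι μ ∧ ∀ p, ι p ⊆ {i | i < n}) ι := by
  rw [minimal_iff_forall_lt, WForm.MinModel, and_assoc]
  refine and_congr_right fun _ => and_congr_right fun hι => forall_congr' fun ι' => ?_
  rw [lt_iff_le_and_ne]
  exact ⟨fun h hlt hsat => h hlt.1 hlt.2 hsat.1,
    fun h hle hne hsat => h ⟨hle, hne⟩ ⟨hsat, fun p => (hle p).trans (hι p)⟩⟩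

lemma bigOr_vars {l : List PF} {v : ℕ × ℕ} :
    v ∈ (bigOr l).vars ↔ ∃ f ∈ l, v ∈ f.vars := by
  induction l with
  | nil => simp [bigOr, PF.vars]
  | cons f l ih =>
      change v ∈ f.vars ∪ (bigOr l).vars ↔ _
      simp [ih]

lemma bigOr_posIn {b : Bool} {l : List PF} (h : ∀ f ∈ l, f.PosIn b) : (bigOr l).PosIn b := by
  induction l with
  | nil => trivial
  | cons f l ih => exact ⟨h f List.mem_cons_self, ih fun g hg => h g (List.mem_cons_of_mem f hg)⟩

lemma lt_of_mem_vars_boolize {n : ℕ} (hn : 0 < n) {ψ : WForm} {e : ℕ → ℕ} {E : ℕ → List ℕ}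
    {v : ℕ × ℕ} (hv : v ∈ (boolize n ψ e E).vars) : v.2 < n := by
  induction ψ generalizing e E with
  | eq | sv => simp [boolize, PF.vars] at hv
  | pr p t =>
      obtain rfl : v = (p, min (t.gidx e) (n - 1)) := hv
      exact (min_le_right _ _).trans_lt (Nat.sub_one_lt_of_lt hn)
  | and a b iha ihb => exact hv.elim iha ihb
  | not a iha => exact iha hv
  | exF x a iha =>
      obtain ⟨f, hf, hvf⟩ := bigOr_vars.mp hv
      obtain ⟨i, -, rfl⟩ := List.mem_map.mp hf
      exact iha hvf
  | exS X a iha =>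
      obtain ⟨f, hf, hvf⟩ := bigOr_vars.mp hv
      obtain ⟨S, -, rfl⟩ := List.mem_map.mp hf
      exact iha hvf

lemma WForm.PosIn.boolize {n : ℕ} {ψ : WForm} {b : Bool} (h : ψ.PosIn b) (e : ℕ → ℕ)
    (E : ℕ → List ℕ) : (boolize n ψ e E).PosIn b := by
  induction ψ generalizing b e E with
  | eq | sv => trivial
  | pr => exact h
  | and a c iha ihc => exact ⟨iha h.1 e E, ihc h.2 e E⟩
  | not a iha => exact iha h e E
  | exF x a iha =>
      refine bigOr_posIn fun f hf => ?_
      obtain ⟨i, -, rfl⟩ := List.mem_map.mp hf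
      exact iha h _ E
  | exS X a iha =>
      refine bigOr_posIn fun f hf => ?_
      obtain ⟨S, -, rfl⟩ := List.mem_map.mp hf
      exact iha h e _

def valuationOrderIso : (ℕ × ℕ → Prop) ≃o (ℕ → Set ℕ) where
  toFun β p := {i | β (p, i)}
  invFun ι v := v.2 ∈ ι v.1
  left_inv _ := rfl
  right_inv _ := rfl
  map_rel_iff' := ⟨fun h v hv => h v.1 hv, fun h p _ hi => h (p, _) hi⟩

lemma OrderIso.minimal_apply_iff {α β : Type*} [Preorder α] [Preorder β] (f : α ≃o β)
    {P : β → Prop} {x : α} : Minimal P (f x) ↔ Minimal (fun x => P (f x)) x :=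
  f.toOrderEmbedding.minimal_apply_mem_iff (t := {y | P y}) (by simp)

section Booleanization

variable {n : ℕ} {ν : ℕ → ℕ} {μ : ℕ → Set ℕ} {ψ : WForm} {e : ℕ → ℕ} {E : ℕ → List ℕ}

lemma boolize_sat_iff (hn : 0 < n)
    (hB : ∀ ι : ℕ → Set ℕ, ψ.Sat n ν ι μ ↔ (boolize n ψ e E).Sat (betaS n ι))
    (β : ℕ × ℕ → Prop) : (boolize n ψ e E).Sat β ↔ ψ.Sat n ν (valuationOrderIso β) μ := by
  rw [hB]
  refine PF.sat_congr fun v hv => ?_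
  -- `betaS` clamps the position to `n - 1`, which does nothing on the variables of `B_n ψ`
  rw [betaS, min_eq_left (Nat.le_sub_one_of_lt (lt_of_mem_vars_boolize hn hv))]
  exact Iff.rfl

lemma boolize_sat_iff_restrict (hn : 0 < n) (β : ℕ × ℕ → Prop) :
    (boolize n ψ e E).Sat β ↔ (boolize n ψ e E).Sat (fun v => β v ∧ v.2 < n) :=
  PF.sat_congr fun _ hv => (and_iff_left (lt_of_mem_vars_boolize hn hv)).symm

lemma boolize_minimal_iff (hn : 0 < n)
    (hB : ∀ ι : ℕ → Set ℕ, ψ.Sat n ν ι μ ↔ (boolize n ψ e E).Sat (betaS n ι))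
    (β : ℕ × ℕ → Prop) :
    Minimal (boolize n ψ e E).Sat β ↔
      Minimal (fun ι => ψ.Sat n ν ι μ ∧ ∀ p, ι p ⊆ {i | i < n}) (valuationOrderIso β) := by
  rw [valuationOrderIso.minimal_apply_iff]
  calc Minimal (boolize n ψ e E).Sat β
      ↔ Minimal (fun β => (boolize n ψ e E).Sat β ∧ ∀ p i, β (p, i) → i < n) β :=
        minimal_iff_minimal_of_imp_of_forall (fun _ h => h.1) fun β hβ =>
          ⟨_, fun _ h => h.1, (boolize_sat_iff_restrict hn β).mp hβ, fun _ _ h => h.2⟩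
    _ ↔ _ := by simp_rw [boolize_sat_iff hn hB]; rfl

lemma boolize_minModel_iff (hn : 0 < n)
    (hB : ∀ ι : ℕ → Set ℕ, ψ.Sat n ν ι μ ↔ (boolize n ψ e E).Sat (betaS n ι))
    (β : ℕ × ℕ → Prop) :
    (boolize n ψ e E).MinModel β ↔ ψ.MinModel n ν μ (valuationOrderIso β) := by
  rw [PF.minModel_iff_minimal, WForm.minModel_iff_minimal, boolize_minimal_iff hn hB]

end Booleanization

theorem stmt15_general (n : ℕ) (hn : 0 < n) (φ : WForm)
    (hsent : φ.freeF = ∅ ∧ φ.freeS = ∅)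
    (ν : ℕ → ℕ) (μ : ℕ → Set ℕ)
    (e : ℕ → ℕ) (E : ℕ → List ℕ)
    (pos : PF → PF)
    (hpos : ∀ f : PF, (pos f).Positive ∧ f.EquivMin (pos f))
    (Pos : WForm → WForm)
    (hPosPos : (Pos φ).Positive)
    (hPosSent : (Pos φ).freeF = ∅ ∧ (Pos φ).freeS = ∅)
    (hPosMin : WForm.EquivMin n ν μ φ (Pos φ))
    (hBn : ∀ ψ : WForm, ψ.freeF = ∅ → ψ.freeS = ∅ →
      ∀ ι : ℕ → Set ℕ, ψ.Sat n ν ι μ ↔ (boolize n ψ e E).Sat (betaS n ι))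
    (hposequiv : ∀ f g : PF, f.Positive → g.Positive →
      (f.EquivMin g ↔ ∀ β, f.Sat β ↔ g.Sat β)) :
    ∀ β : ℕ × ℕ → Prop,
      (pos (boolize n φ e E)).Sat β ↔ (boolize n (Pos φ) e E).Sat β := by
  have hBmin : (boolize n φ e E).EquivMin (boolize n (Pos φ) e E) := fun β => by
    rw [boolize_minModel_iff hn (hBn φ hsent.1 hsent.2),
      boolize_minModel_iff hn (hBn (Pos φ) hPosSent.1 hPosSent.2)]
    exact hPosMin _
  obtain ⟨hpos_positive, hpos_min⟩ := hpos (boolize n φ e E)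
  exact (hposequiv _ _ hpos_positive (hPosPos.boolize e E)).mp
    fun β => (hpos_min β).symm.trans (hBmin β)

/-- Positivation commutes with booleanization up to logical equivalence:
given (i) a propositional positivation `pos` (producing positive formulas
minimally equivalent to their input), (ii) a WS1S positivation `Pos` of the
sentence `φ` (positive and minimally equivalent to `φ`), (iii) correctness of
booleanization on the relevant sentences, and (iv) the fact that two positive
propositional formulas are equivalent iff they are minimally equivalent,
then `pos(B_n(φ)) ≡ B_n(Pos(φ))`. -/
theorem stmt15 (n : ℕ) (hn : 0 < n) (φ : WForm)
    (hsent : φ.freeF = ∅ ∧ φ.freeS = ∅)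
    (ν : ℕ → ℕ) (μ : ℕ → Set ℕ) (hν : ∀ x, ν x < n)
    (e : ℕ → ℕ) (E : ℕ → List ℕ)
    (pos : PF → PF)
    (hpos : ∀ f : PF, (pos f).Positive ∧ f.EquivMin (pos f))
    (Pos : WForm → WForm)
    (hPosPos : (Pos φ).Positive)
    (hPosSent : (Pos φ).freeF = ∅ ∧ (Pos φ).freeS = ∅)
    (hPosMin : WForm.EquivMin n ν μ φ (Pos φ))
    (hBn : ∀ ψ : WForm, ψ.freeF = ∅ → ψ.freeS = ∅ →
      ∀ ι : ℕ → Set ℕ, ψ.Sat n ν ι μ ↔ (boolize n ψ e E).Sat (betaS n ι))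
    (hposequiv : ∀ f g : PF, f.Positive → g.Positive →
      (f.EquivMin g ↔ ∀ β, f.Sat β ↔ g.Sat β)) :
    ∀ β : ℕ × ℕ → Prop,
      (pos (boolize n φ e E)).Sat β ↔ (boolize n (Pos φ) e E).Sat β :=
  stmt15_general n hn φ hsent ν μ e E pos hpos Pos hPosPos hPosSent hPosMin hBn hposequiv
end
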